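/- arXiv:1803.04071 — 7 statements merged into one kernel-verified Lean document; each statement's English description precedes it below -/
import Mathlib

section
/- Let q = 2^n and α, β ∈ F_q with β ≠ 0. The polynomial X^3 + αX + β has exactly one root in F_q if and only if Tr_{q/2}(1 + α^3 β^{-2}) = 1, where Tr_{q/2} denotes the absolute trace from F_q to F_2. -/
section Aux

variable {K : Type*} [Field K] [Fintype K] [Algebra (ZMod 2) K]

lemma trace_sq' (x : K) : Algebra.trace (ZMod 2) K (x ^ 2) = Algebra.trace (ZMod 2) K x := by
  haveI : CharP K 2 := charP_of_injective_algebraMap (algebraMap (ZMod 2) K).injective 2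
  let e : K ≃ₐ[ZMod 2] K :=
    { frobeniusEquiv K 2 with
      commutes' := fun c => by
        show (algebraMap (ZMod 2) K c) ^ 2 = algebraMap (ZMod 2) K c
        rw [← map_pow]; congr 1; revert c; decide }
  exact Algebra.trace_eq_of_algEquiv e x

lemma artin_schreier' (d : K) :
    (∃ y : K, y ^ 2 + y = d) ↔ Algebra.trace (ZMod 2) K d = 0 := by
  haveI : CharP K 2 := charP_of_injective_algebraMap (algebraMap (ZMod 2) K).injective 2
  have h2 : (2 : K) = 0 := by exact_mod_cast CharP.cast_eq_zero K 2
  let φ : K →ₗ[ZMod 2] K :=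
    { toFun := fun x => x ^ 2 + x
      map_add' := fun x y => by linear_combination x * y * h2
      map_smul' := fun c x => by
        fin_cases c
        · exact (by simp : ((0 : ZMod 2) • x) ^ 2 + (0 : ZMod 2) • x = (0 : ZMod 2) • (x ^ 2 + x))
        · exact (by simp : ((1 : ZMod 2) • x) ^ 2 + (1 : ZMod 2) • x = (1 : ZMod 2) • (x ^ 2 + x)) }
  have hker : LinearMap.ker φ = Submodule.span (ZMod 2) {(1 : K)} := by
    ext x
    simp only [LinearMap.mem_ker, Submodule.mem_span_singleton]
    constructor
    · intro hx
      have : x * (x + 1) = 0 := by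
        have : x ^ 2 + x = 0 := hx
        ring_nf; ring_nf at this; linear_combination this
      rcases mul_eq_zero.1 this with h | h
      · exact ⟨0, by simp [h]⟩
      · exact ⟨1, by have : x = -1 := eq_neg_of_add_eq_zero_left h; simp [this, CharTwo.neg_eq]⟩
    · rintro ⟨c, rfl⟩
      fin_cases c <;> simp only [φ, LinearMap.coe_mk, AddHom.coe_mk] <;> simp
      · exact (by rw [zero_smul]; ring : ((0 : ZMod 2) • (1 : K)) ^ 2 + (0 : ZMod 2) • (1 : K) = 0)
      · exact (by rw [one_smul]; linear_combination h2 : ((1 : ZMod 2) • (1 : K)) ^ 2 + (1 : ZMod 2) • (1 : K) = 0)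
  have hrange : LinearMap.range φ ≤ LinearMap.ker (Algebra.trace (ZMod 2) K) := by
    rintro _ ⟨x, rfl⟩
    show Algebra.trace (ZMod 2) K (x ^ 2 + x) = 0
    rw [map_add, trace_sq']
    exact CharTwo.add_self_eq_zero _
  have hsurj : Function.Surjective (Algebra.trace (ZMod 2) K) := Algebra.trace_surjective (ZMod 2) K
  have htop : LinearMap.range (Algebra.trace (ZMod 2) K) = ⊤ := LinearMap.range_eq_top.2 hsurj
  have e1 := LinearMap.finrank_range_add_finrank_ker φ
  have e2 := LinearMap.finrank_range_add_finrank_ker (Algebra.trace (ZMod 2) K : K →ₗ[ZMod 2] ZMod 2)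
  rw [hker, finrank_span_singleton (one_ne_zero : (1:K) ≠ 0)] at e1
  rw [htop, finrank_top] at e2
  have : Module.finrank (ZMod 2) (ZMod 2) = 1 := Module.finrank_self _
  rw [this] at e2
  have heq : LinearMap.range φ = LinearMap.ker (Algebra.trace (ZMod 2) K) :=
    Submodule.eq_of_le_of_finrank_eq hrange (by omega)
  constructor
  · rintro ⟨y, rfl⟩
    have : (y ^ 2 + y) ∈ LinearMap.ker (Algebra.trace (ZMod 2) K) := heq ▸ ⟨y, rfl⟩
    exact this
  · intro hd
    have : d ∈ LinearMap.range φ := heq ▸ hd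
    rcases this with ⟨y, hy⟩
    exact ⟨y, hy⟩

lemma trace_identity' (u : K) (hu : u ≠ 1) :
    Algebra.trace (ZMod 2) K (u ^ 3 * ((1 + u) ^ 2)⁻¹) = Algebra.trace (ZMod 2) K u := by
  haveI : CharP K 2 := charP_of_injective_algebraMap (algebraMap (ZMod 2) K).injective 2
  have h2 : (2 : K) = 0 := by exact_mod_cast CharP.cast_eq_zero K 2
  have h1u : (1 + u) ≠ 0 := by
    intro h; apply hu; linear_combination h - h2
  set z := (1 + u)⁻¹ with hz
  have key : u ^ 3 * ((1 + u) ^ 2)⁻¹ = u + (z + z ^ 2) := by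
    rw [hz]; field_simp
    linear_combination (-1 - u - u^2) * h2
  rw [key, map_add, map_add, trace_sq', CharTwo.add_self_eq_zero, add_zero]

lemma root_quad' (a b r : K) (hb : b ≠ 0) (hr : r ^ 3 + a * r + b = 0) :
    ((∃ s : K, s ^ 2 + r * s + (r ^ 2 + a) = 0) ↔
      Algebra.trace (ZMod 2) K (1 + a ^ 3 * (b ^ 2)⁻¹) = 0) := by
  haveI : CharP K 2 := charP_of_injective_algebraMap (algebraMap (ZMod 2) K).injective 2
  have h2 : (2 : K) = 0 := by exact_mod_cast CharP.cast_eq_zero K 2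
  have hr0 : r ≠ 0 := by rintro rfl; apply hb; linear_combination hr
  have hra : r ^ 2 ≠ a := by
    intro h; apply hb; linear_combination hr - r * h - (a*r) * h2
  set u : K := a * (r ^ 2)⁻¹ with hu
  have hu1 : u ≠ 1 := by
    intro h; apply hra
    rw [hu] at h; field_simp at h; rw [h]
  have h1u : (1 + u) ≠ 0 := by
    intro h; apply hu1; linear_combination h - h2
  have hb_eq : b = r ^ 3 * (1 + u) := by
    rw [hu]; field_simp
    linear_combination hr - (r^3 + a*r) * h2
  have hmain : (1 : K) + a ^ 3 * (b ^ 2)⁻¹ = 1 + u ^ 3 * ((1 + u) ^ 2)⁻¹ := by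
    rw [hb_eq, hu]; field_simp
  have step1 : (∃ s : K, s ^ 2 + r * s + (r ^ 2 + a) = 0) ↔
      (∃ y : K, y ^ 2 + y = 1 + u) := by
    constructor
    · rintro ⟨s, hs⟩
      refine ⟨s * r⁻¹, ?_⟩
      rw [hu]; field_simp
      linear_combination hs - (r^2 + a) * h2
    · rintro ⟨y, hy⟩
      refine ⟨r * y, ?_⟩
      rw [hu] at hy; field_simp at hy
      linear_combination hy + (r^2 + a) * h2
  have htr : Algebra.trace (ZMod 2) K (1 + u ^ 3 * ((1 + u) ^ 2)⁻¹)
      = Algebra.trace (ZMod 2) K (1 + u) := by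
    rw [map_add, map_add, trace_identity' _ hu1]
  rw [step1, artin_schreier', hmain, htr]

end Aux

/-- For q = 2^n and α, β ∈ F_q with β ≠ 0, the polynomial
X^3 + αX + β has exactly one root in F_q iff Tr_{q/2}(1 + α³β⁻²) = 1. -/
theorem stmt_0 (n : ℕ) (hn : 0 < n) (F : Type*) [Field F] [Fintype F]
    [Algebra (ZMod 2) F] (hF : Fintype.card F = 2 ^ n) (α β : F) (hβ : β ≠ 0) :
    (∃! x : F, x ^ 3 + α * x + β = 0) ↔
      Algebra.trace (ZMod 2) F (1 + α ^ 3 * (β ^ 2)⁻¹) = 1 := by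
  haveI : CharP F 2 := charP_of_injective_algebraMap (algebraMap (ZMod 2) F).injective 2
  have h2 : (2 : F) = 0 := by exact_mod_cast CharP.cast_eq_zero F 2
  have tr01 : ∀ t : ZMod 2, t ≠ 0 → t = 1 := by decide
  constructor
  · rintro ⟨r, hr, huniq⟩
    refine tr01 _ (fun h0 => ?_)
    obtain ⟨s, hs⟩ := (root_quad' α β r hβ hr).2 h0
    have hfs : s ^ 3 + α * s + β = 0 := by
      linear_combination (s + r) * hs + hr + (-(r*s^2) - r^2*s - r^3 - α*r) * h2
    have hsr := huniq s hfs
    rw [hsr] at hs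
    exact hβ (by linear_combination hr - r * hs + r^3 * h2)
  · intro hTr
    by_cases hroot : ∃ r : F, r ^ 3 + α * r + β = 0
    · obtain ⟨r, hr⟩ := hroot
      refine ⟨r, hr, fun x hx => ?_⟩
      by_contra hne
      have hfact : (x + r) * (x ^ 2 + r * x + (r ^ 2 + α)) = 0 := by
        linear_combination hx - hr + (r*x^2 + r^2*x + r^3 + α*r) * h2
      rcases mul_eq_zero.1 hfact with h | h
      · exact hne (by linear_combination h - r * h2)
      · have h0 := (root_quad' α β r hβ hr).1 ⟨x, h⟩
        rw [hTr] at h0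
        exact one_ne_zero h0
    · exfalso
      push_neg at hroot
      classical
      set f : Polynomial F := Polynomial.X ^ 3 + Polynomial.C α * Polynomial.X + Polynomial.C β
        with hf
      have hdeg3 : f.natDegree = 3 := by
        rw [hf]; compute_degree!
      have hmon : f.Monic := by
        rw [hf, add_assoc]
        apply Polynomial.monic_X_pow_add
        apply lt_of_le_of_lt (Polynomial.degree_add_le _ _)
        rw [max_lt_iff]
        constructor
        · apply lt_of_le_of_lt (Polynomial.degree_mul_le _ _)
          have h1 := Polynomial.degree_C_le (a := α)
          have h2' := Polynomial.degree_X_le (R := F)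
          calc Polynomial.degree (Polynomial.C α) + Polynomial.degree (Polynomial.X : Polynomial F)
              ≤ 0 + 1 := add_le_add h1 h2'
            _ < 3 := by norm_num
        · exact lt_of_le_of_lt Polynomial.degree_C_le (by norm_num)
      have hirr : Irreducible f := by
        rw [hmon.irreducible_iff_roots_eq_zero_of_degree_le_three (by omega) (by omega)]
        rw [Multiset.eq_zero_iff_forall_notMem]
        intro x hx
        rw [Polynomial.mem_roots hmon.ne_zero] at hx
        apply hroot x
        have hev : Polynomial.eval x f = x ^ 3 + α * x + β := by simp [hf]
        rw [Polynomial.IsRoot, hev] at hx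
        exact hx
      haveI : Fact (Irreducible f) := ⟨hirr⟩
      let K := AdjoinRoot f
      let pb : PowerBasis F K := AdjoinRoot.powerBasis hmon.ne_zero
      haveI : FiniteDimensional F K := Module.Finite.of_basis pb.basis
      haveI : Finite K := Module.finite_of_finite F
      haveI : Fintype K := Fintype.ofFinite K
      haveI : CharP K 2 := charP_of_injective_algebraMap (algebraMap F K).injective 2
      letI : Algebra (ZMod 2) K := ZMod.algebra _ _
      haveI := IsScalarTower.of_algebraMap_eq' (R := ZMod 2) (S := F) (A := K) (Subsingleton.elim _ _)
      have h2K : (2 : K) = 0 := by exact_mod_cast CharP.cast_eq_zero K 2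
      have hfinrank : Module.finrank F K = 3 := by
        rw [pb.finrank]
        show f.natDegree = 3
        exact hdeg3
      set A := algebraMap F K α with hA
      set B := algebraMap F K β with hB
      set r := AdjoinRoot.root f with hrdef
      have hrK : r ^ 3 + A * r + B = 0 := by
        have h0 := AdjoinRoot.eval₂_root f
        rw [hf] at h0
        simp [Polynomial.eval₂_add, Polynomial.eval₂_mul, Polynomial.eval₂_pow,
          Polynomial.eval₂_X, Polynomial.eval₂_C, hA, hB, AdjoinRoot.algebraMap_eq] at h0
        exact h0
      have hBne : B ≠ 0 := fun h =>
        hβ ((algebraMap F K).injective (by rw [map_zero]; exact hB ▸ h))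
      have hq : ∀ x : F, x ^ (2 ^ n) = x := fun x => by rw [← hF]; exact FiniteField.pow_card x
      have hfixA : A ^ (2 ^ n) = A := by rw [hA, ← map_pow, hq]
      have hfixB : B ^ (2 ^ n) = B := by rw [hB, ← map_pow, hq]
      have hroot2 : (r ^ (2 ^ n)) ^ 3 + A * r ^ (2 ^ n) + B = 0 := by
        have hc := congrArg (iterateFrobenius K 2 n) hrK
        simpa [map_add, map_mul, map_pow, iterateFrobenius_def, hfixA, hfixB] using hc
      have hfrob_ne : r ^ (2 ^ n) ≠ r := by
        intro hfixr
        set g : Polynomial K := Polynomial.X ^ (2 ^ n) - Polynomial.X with hg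
        have hdegg : g.natDegree = 2 ^ n := by
          rw [hg]
          compute_degree!
          · have h2n : 2 ≤ 2 ^ n := by
              calc 2 = 2 ^ 1 := (pow_one 2).symm
                _ ≤ 2 ^ n := Nat.pow_le_pow_right (by norm_num) hn
            rw [if_neg (by omega)]
            norm_num
          · exact Nat.one_le_two_pow
        have hgne : g ≠ 0 := by
          intro h
          rw [h, Polynomial.natDegree_zero] at hdegg
          have hp : (0:ℕ) < 2 ^ n := pow_pos (by norm_num) n
          omega
        have hsub : insert r (Finset.univ.image (algebraMap F K)) ⊆ g.roots.toFinset := by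
          intro x hx
          rw [Multiset.mem_toFinset, Polynomial.mem_roots hgne]
          simp only [Finset.mem_insert, Finset.mem_image] at hx
          rcases hx with rfl | ⟨c, _, rfl⟩
          · simp [hg, Polynomial.IsRoot, hfixr]
          · simp only [hg, Polynomial.IsRoot, Polynomial.eval_sub, Polynomial.eval_pow,
              Polynomial.eval_X]
            rw [← map_pow, hq, sub_self]
        have hrnotin : r ∉ Finset.univ.image (algebraMap F K) := by
          intro hmem
          simp only [Finset.mem_image] at hmem
          obtain ⟨c, _, hc⟩ := hmem
          apply hroot c
          apply (algebraMap F K).injective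
          rw [map_zero, map_add, map_add, map_mul, map_pow, hc]
          exact hrK
        have hcard := Finset.card_le_card hsub
        rw [Finset.card_insert_of_notMem hrnotin,
          Finset.card_image_of_injective _ (algebraMap F K).injective, Finset.card_univ, hF]
          at hcard
        have hle := (Multiset.toFinset_card_le g.roots).trans (Polynomial.card_roots' g)
        rw [hdegg] at hle
        omega
      have hfact : (r ^ (2 ^ n) + r) * ((r ^ (2 ^ n)) ^ 2 + r * r ^ (2 ^ n) + (r ^ 2 + A)) = 0 := by
        linear_combination hroot2 - hrK +
          (r * (r ^ (2 ^ n)) ^ 2 + r ^ 2 * r ^ (2 ^ n) + r ^ 3 + A * r) * h2K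
      have hqr : (r ^ (2 ^ n)) ^ 2 + r * r ^ (2 ^ n) + (r ^ 2 + A) = 0 := by
        rcases mul_eq_zero.1 hfact with h | h
        · exact absurd (by linear_combination h - r * h2K) hfrob_ne
        · exact h
      have h0 := (root_quad' A B r hBne hrK).1 ⟨r ^ (2 ^ n), hqr⟩
      have hAB : (1 : K) + A ^ 3 * (B ^ 2)⁻¹ = algebraMap F K (1 + α ^ 3 * (β ^ 2)⁻¹) := by
        rw [map_add, map_one, map_mul, map_pow, map_inv₀, map_pow, hA, hB]
      rw [hAB] at h0
      have h3smul : (Module.finrank F K) • (1 + α ^ 3 * (β ^ 2)⁻¹) = 1 + α ^ 3 * (β ^ 2)⁻¹ := by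
        rw [hfinrank]
        rw [nsmul_eq_mul]
        push_cast
        linear_combination (1 + α ^ 3 * (β ^ 2)⁻¹) * h2
      rw [← Algebra.trace_trace (S := F), Algebra.trace_algebraMap, h3smul, hTr] at h0
      exact one_ne_zero h0
end

section
/- Let q be even and f(X) = X + aX^{q(q-1)+1} + bX^{2(q-1)+1} ∈ F_{q^2}[X] with a, b ∈ F_{q^2}^*. If β ∈ F_{q^2} satisfies β^4 = b, then f(X) is a permutation polynomial of F_{q^2} if and only if the polynomial X + a'X^{q(q-1)+1} + b'X^{2(q-1)+1} is a permutation polynomial of F_{q^2}, where a' = aβ^{1-q} and b' = β^{2(q+1)}; moreover b' ∈ F_q^*. -/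
/-- substituting X ↦ βX with β⁴ = b reduces to the case b ∈ F_q^*. -/
theorem stmt_1 (n q : ℕ) (hn : 0 < n) (hq : q = 2 ^ n)
    (K : Type*) [Field K] [Fintype K] (hK : Fintype.card K = q ^ 2)
    (a b β : K) (ha : a ≠ 0) (hb : b ≠ 0) (hβ : β ^ 4 = b) :
    ((Function.Bijective fun x : K =>
        x + a * x ^ (q * (q - 1) + 1) + b * x ^ (2 * (q - 1) + 1)) ↔
      (Function.Bijective fun x : K =>
        x + (a * β * (β ^ q)⁻¹) * x ^ (q * (q - 1) + 1)
          + β ^ (2 * (q + 1)) * x ^ (2 * (q - 1) + 1))) ∧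
    β ^ (2 * (q + 1)) ≠ 0 ∧ (β ^ (2 * (q + 1))) ^ q = β ^ (2 * (q + 1)) := by
  have hβ0 : β ≠ 0 := by
    intro h; apply hb; rw [← hβ, h]; simp
  have hβq : (β : K) ^ q ≠ 0 := pow_ne_zero _ hβ0
  have hq1 : 1 ≤ q := hq ▸ Nat.one_le_two_pow
  obtain ⟨k, hk⟩ : ∃ k, q = k + 1 := ⟨q - 1, by omega⟩
  have hcard : β ^ (q ^ 2) = β := by rw [← hK]; exact FiniteField.pow_card β
  subst hk
  -- key coefficient identities
  have h1 : a * β ^ ((k + 1) * (k + 1 - 1) + 1) = β * (a * β * (β ^ (k + 1))⁻¹) := by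
    apply mul_right_cancel₀ hβq
    have he : (k + 1) * (k + 1 - 1) + 1 + (k + 1) = (k + 1) ^ 2 + 1 := by
      simp only [Nat.add_sub_cancel]; ring
    have hL : a * β ^ ((k + 1) * (k + 1 - 1) + 1) * β ^ (k + 1) = a * (β * β) := by
      rw [mul_assoc, ← pow_add, he, pow_add, pow_one, hcard]
    rw [hL]
    field_simp
  have h2 : b * β ^ (2 * (k + 1 - 1) + 1) = β * β ^ (2 * (k + 1 + 1)) := by
    simp only [Nat.add_sub_cancel]
    rw [← hβ, ← pow_add, ← pow_succ']
    ring_nf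
  have key : ∀ x : K,
      (fun x : K => x + a * x ^ ((k + 1) * (k + 1 - 1) + 1)
          + b * x ^ (2 * (k + 1 - 1) + 1)) (β * x)
        = β * ((fun x : K => x + (a * β * (β ^ (k + 1))⁻¹) * x ^ ((k + 1) * (k + 1 - 1) + 1)
          + β ^ (2 * (k + 1 + 1)) * x ^ (2 * (k + 1 - 1) + 1)) x) := by
    intro x
    simp only [mul_pow]
    calc β * x + a * (β ^ ((k + 1) * (k + 1 - 1) + 1) * x ^ ((k + 1) * (k + 1 - 1) + 1))
          + b * (β ^ (2 * (k + 1 - 1) + 1) * x ^ (2 * (k + 1 - 1) + 1))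
        = β * x + (a * β ^ ((k + 1) * (k + 1 - 1) + 1)) * x ^ ((k + 1) * (k + 1 - 1) + 1)
          + (b * β ^ (2 * (k + 1 - 1) + 1)) * x ^ (2 * (k + 1 - 1) + 1) := by ring
      _ = _ := by rw [h1, h2]; ring
  constructor
  · have hmul : Function.Bijective (fun x : K => β * x) :=
      (Equiv.mulLeft₀ β hβ0).bijective
    have hcomp : ((fun x : K => x + a * x ^ ((k + 1) * (k + 1 - 1) + 1)
          + b * x ^ (2 * (k + 1 - 1) + 1)) ∘ (fun x : K => β * x))
        = ((fun x : K => β * x) ∘ (fun x : K =>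
            x + (a * β * (β ^ (k + 1))⁻¹) * x ^ ((k + 1) * (k + 1 - 1) + 1)
          + β ^ (2 * (k + 1 + 1)) * x ^ (2 * (k + 1 - 1) + 1))) := by
      funext x; exact key x
    rw [← Function.Bijective.of_comp_iff _ hmul, hcomp,
      Function.Bijective.of_comp_iff' hmul]
  refine ⟨pow_ne_zero _ hβ0, ?_⟩
  rw [← pow_mul]
  have he : 2 * (k + 1 + 1) * (k + 1) = (k + 1) ^ 2 + ((k + 1) ^ 2 + 2 * (k + 1)) := by ring
  rw [he, pow_add, pow_add, hcard, ← pow_succ', ← pow_succ']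
  congr 1
end

section
/- Let q be even, a, b ∈ F_q^* with Tr_{q/2}(b(a^2+b^2)/a^2) = 0 and 1 + a + b ≠ 0. Then the polynomial bX^3 + X + a has no root in μ_{q+1} = {x ∈ F_{q^2}^* : x^{q+1} = 1}. -/
open Module

lemma char_two_add_eq_zero {R : Type*} [CommRing R] [CharP R 2] {u v : R}
    (h : u + v = 0) : u = v := by
  have h2 : (2 : R) = 0 := CharTwo.two_eq_zero
  linear_combination h - v * h2

section AS

variable (F : Type*) [Field F] [Fintype F] [Algebra (ZMod 2) F]

lemma my_trace_frob [CharP F 2] (z : F) :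
    Algebra.trace (ZMod 2) F (z ^ 2) = Algebra.trace (ZMod 2) F z := by
  let e : F ≃ₐ[ZMod 2] F :=
    AlgEquiv.ofRingEquiv (f := frobeniusEquiv F 2) (by
      intro x
      simp only [frobeniusEquiv_def]
      rw [← map_pow]
      congr 1
      exact ZMod.pow_card x)
  have : e z = z ^ 2 := rfl
  rw [← this, Algebra.trace_eq_of_algEquiv]

lemma my_artin_schreier (c : F) (hc : Algebra.trace (ZMod 2) F c = 0) :
    ∃ z : F, z ^ 2 + z = c := by
  haveI : CharP F 2 := charP_of_injective_algebraMap (algebraMap (ZMod 2) F).injective 2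
  classical
  let φ : F →ₗ[ZMod 2] F :=
    AddMonoidHom.toZModLinearMap 2 ((frobenius F 2).toAddMonoidHom + AddMonoidHom.id F)
  have hφ : ∀ z, φ z = z ^ 2 + z := fun z => by
    show frobenius F 2 z + z = z ^ 2 + z
    rw [frobenius_def]
  have hle : LinearMap.range φ ≤ LinearMap.ker (Algebra.trace (ZMod 2) F) := by
    rintro _ ⟨z, rfl⟩
    rw [LinearMap.mem_ker, hφ, map_add, my_trace_frob]
    exact CharTwo.add_self_eq_zero _
  have hker : LinearMap.ker φ ≤ Submodule.span (ZMod 2) {(1 : F)} := by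
    intro z hz
    rw [LinearMap.mem_ker, hφ] at hz
    have hzz : z * (z + 1) = 0 := by ring_nf; linear_combination hz
    rcases mul_eq_zero.mp hzz with h | h
    · simp [h]
    · have hz1 : z = 1 := by
        have := char_two_add_eq_zero h
        simpa using this
      rw [hz1]
      exact Submodule.mem_span_singleton_self 1
  have hkf : finrank (ZMod 2) (LinearMap.ker φ) ≤ 1 := by
    refine le_trans (Submodule.finrank_mono hker) ?_
    simpa using (finrank_span_singleton (K := ZMod 2) (one_ne_zero (α := F))).le
  have h1 := LinearMap.finrank_range_add_finrank_ker φ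
  have h2 := LinearMap.finrank_range_add_finrank_ker (Algebra.trace (ZMod 2) F)
  have hsurj : Function.Surjective (Algebra.trace (ZMod 2) F) :=
    Algebra.trace_surjective (ZMod 2) F
  have hrT : finrank (ZMod 2) (LinearMap.range (Algebra.trace (ZMod 2) F)) = 1 := by
    rw [LinearMap.range_eq_top.mpr hsurj, finrank_top, finrank_self]
  have heq : LinearMap.range φ = LinearMap.ker (Algebra.trace (ZMod 2) F) := by
    apply Submodule.eq_of_le_of_finrank_le hle
    omega
  have hcmem : c ∈ LinearMap.range φ := heq ▸ (LinearMap.mem_ker.mpr hc)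
  obtain ⟨z, hz⟩ := hcmem
  exact ⟨z, by rw [← hφ z, hz]⟩

end AS

/-- if Tr(b(a²+b²)/a²) = 0 and 1 + a + b ≠ 0, then
bX³ + X + a has no root in μ_{q+1}. -/
theorem stmt_5 (n q : ℕ) (hn : 0 < n) (hq : q = 2 ^ n)
    (F K : Type*) [Field F] [Fintype F] [Field K] [Fintype K]
    [Algebra F K] [Algebra (ZMod 2) F]
    (hF : Fintype.card F = q) (hK : Fintype.card K = q ^ 2)
    (a b : F) (ha : a ≠ 0) (hb : b ≠ 0)
    (htr : Algebra.trace (ZMod 2) F (b * (a ^ 2 + b ^ 2) / a ^ 2) = 0)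
    (hab : 1 + a + b ≠ 0) :
    ∀ x : K, x ≠ 0 → x ^ (q + 1) = 1 →
      algebraMap F K b * x ^ 3 + x + algebraMap F K a ≠ 0 := by
  haveI : CharP F 2 := charP_of_injective_algebraMap (algebraMap (ZMod 2) F).injective 2
  haveI : CharP K 2 := charP_of_injective_algebraMap' F (A := K) 2
  have h2 : (2 : K) = 0 := CharTwo.two_eq_zero
  have h2F : (2 : F) = 0 := CharTwo.two_eq_zero
  intro x hx0 hxq heq
  set A := algebraMap F K a with hA
  set B := algebraMap F K b with hB
  have hinj : Function.Injective (algebraMap F K) := (algebraMap F K).injective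
  have hA0 : A ≠ 0 := fun h => ha (hinj (by rw [map_zero]; exact h))
  have hB0 : B ≠ 0 := fun h => hb (hinj (by rw [map_zero]; exact h))
  -- x^q = x⁻¹
  have hxq' : x ^ q * x = 1 := by rw [← pow_succ]; exact hxq
  have hxinv : x ^ q = x⁻¹ := eq_inv_of_mul_eq_one_left hxq'
  -- apply Frobenius (q-th power) to the equation
  have hfrob : ∀ y z w : K, (y + z + w) ^ q = y ^ q + z ^ q + w ^ q := by
    intro y z w
    subst hq
    rw [← iterateFrobenius_def (p := 2) (n := n), ← iterateFrobenius_def (p := 2) (n := n),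
      ← iterateFrobenius_def (p := 2) (n := n), ← iterateFrobenius_def (p := 2) (n := n),
      map_add, map_add]
  have hAq : A ^ q = A := by
    rw [hA, ← map_pow]; congr 1; rw [← hF]; exact FiniteField.pow_card a
  have hBq : B ^ q = B := by
    rw [hB, ← map_pow]; congr 1; rw [← hF]; exact FiniteField.pow_card b
  have heq2 : B * (x⁻¹) ^ 3 + x⁻¹ + A = 0 := by
    have h := hfrob (B * x ^ 3) x A
    rw [heq] at h
    rw [mul_pow, ← pow_mul, mul_comm 3 q, pow_mul, hxinv, hBq, hAq] at h
    rw [← h, zero_pow (by rw [hq]; exact pow_ne_zero n two_ne_zero)]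
  -- multiply by x^3 : A x³ + x² + B = 0
  have heq3 : A * x ^ 3 + x ^ 2 + B = 0 := by
    have h := congrArg (· * x ^ 3) heq2
    simp only [zero_mul, add_mul] at h
    rw [← h]
    field_simp
    ring
  -- quadratic : B x² + A x + (A² + B²) = 0
  have hquad : B * x ^ 2 + A * x + (A ^ 2 + B ^ 2) = 0 := by
    linear_combination A * heq + B * heq3 - (A * B * x ^ 3) * h2
  -- Artin-Schreier root in F
  obtain ⟨z, hz⟩ := my_artin_schreier F _ htr
  have hz2 : (z ^ 2 + z) * a ^ 2 = b * (a ^ 2 + b ^ 2) := by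
    rw [hz, div_mul_cancel₀]
    exact pow_ne_zero 2 ha
  -- r := (a/b) z is a root of the quadratic over F
  set r : F := a / b * z with hr
  have hrF : b * r ^ 2 + a * r + (a ^ 2 + b ^ 2) = 0 := by
    rw [hr]
    field_simp
    ring_nf
    linear_combination hz2 + (a ^ 2 * b + b ^ 3) * h2F
  -- transfer to K
  set R : K := algebraMap F K r with hR
  have hrK : B * R ^ 2 + A * R + (A ^ 2 + B ^ 2) = 0 := by
    have h := congrArg (algebraMap F K) hrF
    simpa [map_add, map_mul, map_pow] using h
  -- difference : (x + R) * (B * (x + R) + A) = 0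
  have hdiff : (x + R) * (B * (x + R) + A) = 0 := by
    linear_combination hquad - hrK + (B * x * R + B * R ^ 2 + A * R) * h2
  -- hence x is in the image of F
  have hxF : ∃ y : F, x = algebraMap F K y := by
    rcases mul_eq_zero.mp hdiff with h | h
    · exact ⟨r, by have := char_two_add_eq_zero h; simpa [hR] using this⟩
    · have hBx : B * (x + R) = A := char_two_add_eq_zero h
      refine ⟨r + a / b, mul_left_cancel₀ hB0 ?_⟩
      have hsimp : B * algebraMap F K (r + a / b) = B * R + A := by
        rw [map_add, map_div₀, ← hR, ← hA, ← hB]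
        field_simp
      rw [hsimp]
      linear_combination hBx - B * R * h2
  obtain ⟨y, hy⟩ := hxF
  -- x is fixed by Frobenius, so x² = 1, so x = 1
  have hxfix : x ^ q = x := by
    rw [hy, ← map_pow]; congr 1; rw [← hF]; exact FiniteField.pow_card y
  have hx2 : x ^ 2 = 1 := by
    have hxx : x⁻¹ = x := by rw [← hxinv, hxfix]
    have h := congrArg (· * x) hxx
    simp only [inv_mul_cancel₀ hx0] at h
    rw [pow_two, ← h]
  have hx1 : x = 1 := by
    have hsq : (x + 1) ^ 2 = 0 := by linear_combination hx2 + x * h2 + h2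
    have h := pow_eq_zero_iff (n := 2) (by norm_num) |>.mp hsq
    have := char_two_add_eq_zero h
    simpa using this
  -- conclude : 1 + a + b = 0, contradiction
  apply hab
  apply hinj
  rw [hx1] at heq
  simp only [map_add, map_one, map_zero]
  rw [← hA, ← hB]
  linear_combination heq
end

section
/- Let q be even and a, b ∈ F_q^* with either (b = 1 and Tr_{q/2}(1 + a^{-1}) = 0) or (b ≠ 1, Tr_{q/2}(b/(b+1)) = 0 and a^2 = b(b+1)). Then 1 + a + b ≠ 0 and Tr_{q/2}(b(a^2 + b^2)/a^2) = 0. -/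
lemma trace_sq_eq (F : Type*) [Field F] [Fintype F] [Algebra (ZMod 2) F]
    (x : F) : Algebra.trace (ZMod 2) F (x ^ 2) = Algebra.trace (ZMod 2) F x := by
  haveI : CharP F 2 := charP_of_injective_algebraMap (algebraMap (ZMod 2) F).injective 2
  let e : F ≃ₐ[ZMod 2] F :=
    AlgEquiv.ofRingEquiv (f := frobeniusEquiv F 2) (fun c => by
      rw [frobeniusEquiv_def, ← map_pow, ZMod.pow_card])
  have h := Algebra.trace_eq_of_algEquiv e x
  have hex : e x = x ^ 2 := rfl
  rw [hex] at h
  exact h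

/-- conditions (i) or (ii) imply 1 + a + b ≠ 0 and
Tr(b(a² + b²)/a²) = 0. -/
theorem stmt_6 (n : ℕ) (hn : 0 < n) (F : Type*) [Field F] [Fintype F]
    [Algebra (ZMod 2) F] (hF : Fintype.card F = 2 ^ n)
    (a b : F) (ha : a ≠ 0) (hb : b ≠ 0)
    (h : (b = 1 ∧ Algebra.trace (ZMod 2) F (1 + a⁻¹) = 0) ∨
         (b ≠ 1 ∧ Algebra.trace (ZMod 2) F (b / (b + 1)) = 0 ∧ a ^ 2 = b * (b + 1))) :
    1 + a + b ≠ 0 ∧ Algebra.trace (ZMod 2) F (b * (a ^ 2 + b ^ 2) / a ^ 2) = 0 := by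
  haveI : CharP F 2 := charP_of_injective_algebraMap (algebraMap (ZMod 2) F).injective 2
  have h2 : (2 : F) = 0 := CharP.cast_eq_zero F 2
  rcases h with ⟨hb1, ht⟩ | ⟨hb1, ht, ha2⟩
  · subst hb1
    refine ⟨fun hc => ha (by linear_combination hc - h2), ?_⟩
    have heq : (1 : F) * (a ^ 2 + 1 ^ 2) / a ^ 2 = (1 + a⁻¹) ^ 2 := by
      rw [div_eq_iff (pow_ne_zero 2 ha)]
      have hinv : a⁻¹ * a = 1 := inv_mul_cancel₀ ha
      linear_combination (-(a⁻¹ * a + 1)) * hinv + (-(a⁻¹ * a ^ 2)) * h2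
    rw [heq, trace_sq_eq, ht]
  · have hb1' : b + 1 ≠ 0 := fun hc => hb1 (by linear_combination hc - h2)
    constructor
    · intro hc
      have hab : a = 1 + b := by linear_combination hc - (1 + b) * h2
      exact hb1 (by linear_combination -ha2 + (a + 1 + b) * hab + b * h2)
    · have heq : b * (a ^ 2 + b ^ 2) / a ^ 2 = b / (b + 1) := by
        rw [div_eq_div_iff (pow_ne_zero 2 ha) hb1']
        linear_combination (b ^ 2) * ha2 + (b ^ 4 + b ^ 3) * h2
      rw [heq, ht]
end

section
/- Let q be even and a_1, b ∈ F_q^* with b ≠ 1, 1 + a_1^2 + a_1 b + a_1 b^2 + b^4 = 0, and 1 + a_1^2 + b + b^2 + b^3 ≠ 0. Then Tr_{q/2}((1 + a_1^4 + a_1^4 b^2 + a_1^2 b^3 + a_1^2 b^7 + b^8) / (a_1^2 (1 + a_1^2 + b + b^2 + b^3)^2)) = 0. -/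
/-- In a finite field of characteristic 2, the trace to `ZMod 2` of `x ^ 2 + x` vanishes. -/
lemma trace_sq_add_self (F : Type*) [Field F] [Fintype F] [Algebra (ZMod 2) F]
    (x : F) : Algebra.trace (ZMod 2) F (x ^ 2 + x) = 0 := by
  haveI : CharP F 2 := charP_of_injective_algebraMap (algebraMap (ZMod 2) F).injective 2
  have hcomm : ∀ r : ZMod 2, (frobeniusEquiv F 2) (algebraMap (ZMod 2) F r)
      = algebraMap (ZMod 2) F r := by
    intro r
    have hr : r ^ 2 = r := ZMod.pow_card r
    calc (frobeniusEquiv F 2) (algebraMap (ZMod 2) F r)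
        = (algebraMap (ZMod 2) F r) ^ 2 := by
          simp [frobeniusEquiv_apply, frobenius_def]
      _ = algebraMap (ZMod 2) F (r ^ 2) := by rw [map_pow]
      _ = algebraMap (ZMod 2) F r := by rw [hr]
  have hsq : Algebra.trace (ZMod 2) F (x ^ 2) = Algebra.trace (ZMod 2) F x := by
    have := Algebra.trace_eq_of_algEquiv (AlgEquiv.ofRingEquiv hcomm) x
    rw [AlgEquiv.ofRingEquiv_apply] at this
    rw [← this]
    congr 1
  rw [map_add, hsq, ← two_mul]
  have : (2 : ZMod 2) = 0 := by decide
  rw [this, zero_mul]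

/-- the trace computation at the end of the proof of Prop. 3.1. -/
theorem stmt_12 (n : ℕ) (hn : 0 < n) (F : Type*) [Field F] [Fintype F]
    [Algebra (ZMod 2) F] (hF : Fintype.card F = 2 ^ n)
    (a₁ b : F) (ha : a₁ ≠ 0) (hb : b ≠ 0) (hb1 : b ≠ 1)
    (h1 : 1 + a₁ ^ 2 + a₁ * b + a₁ * b ^ 2 + b ^ 4 = 0)
    (h2 : 1 + a₁ ^ 2 + b + b ^ 2 + b ^ 3 ≠ 0) :
    Algebra.trace (ZMod 2) F
      ((1 + a₁ ^ 4 + a₁ ^ 4 * b ^ 2 + a₁ ^ 2 * b ^ 3 + a₁ ^ 2 * b ^ 7 + b ^ 8) /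
        (a₁ ^ 2 * (1 + a₁ ^ 2 + b + b ^ 2 + b ^ 3) ^ 2)) = 0 := by
  haveI : CharP F 2 := charP_of_injective_algebraMap (algebraMap (ZMod 2) F).injective 2
  have htwo : (2 : F) = 0 := by
    exact_mod_cast CharP.cast_eq_zero F 2
  set D₁ : F := 1 + a₁ ^ 2 + b + b ^ 2 + b ^ 3 with hD₁
  set P : F := b ^ 2 + b ^ 6 with hP
  have key : (1 + a₁ ^ 4 + a₁ ^ 4 * b ^ 2 + a₁ ^ 2 * b ^ 3 + a₁ ^ 2 * b ^ 7 + b ^ 8)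
      = P ^ 2 + P * (a₁ * D₁) := by
    rw [hP, hD₁]
    linear_combination (-1 + 4*b^3 + 2*b^4 + 2*b^5 + 2*b^7 + b^8 - a₁*b - 2*a₁*b^2 - a₁*b^3
        - a₁*b^4 - a₁*b^6 + a₁^2 + a₁^2*b^2) * h1
      + (1 - 2*b^3 - b^4 - b^5 - 3*b^7 - 2*b^8 - b^9 - b^11 - b^12 + a₁*b + a₁*b^2 - 2*a₁*b^4
        - 3*a₁*b^5 - a₁*b^6 - a₁*b^7 - a₁*b^8 - 2*a₁*b^9) * htwo
  have hfrac : (1 + a₁ ^ 4 + a₁ ^ 4 * b ^ 2 + a₁ ^ 2 * b ^ 3 + a₁ ^ 2 * b ^ 7 + b ^ 8) /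
        (a₁ ^ 2 * D₁ ^ 2) = (P / (a₁ * D₁)) ^ 2 + P / (a₁ * D₁) := by
    rw [key]
    field_simp
  rw [hfrac]
  exact trace_sq_add_self F _
end

section
/- Let q be even and b ∈ F_q with 1 + a_1^2 + b + b^2 + b^3 = 0 and 1 + a_1^2 + a_1 b + a_1 b^2 + b^4 = 0 for some a_1 ∈ F_q. Then b(1 + b) = 0. -/
/-- the two equations together imply b(1 + b) = 0. -/
theorem stmt_15 (n : ℕ) (hn : 0 < n) (F : Type*) [Field F] [Fintype F]
    (hF : Fintype.card F = 2 ^ n) (b a₁ : F)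
    (h1 : 1 + a₁ ^ 2 + b + b ^ 2 + b ^ 3 = 0)
    (h2 : 1 + a₁ ^ 2 + a₁ * b + a₁ * b ^ 2 + b ^ 4 = 0) :
    b * (1 + b) = 0 := by
  have hcard : ((Fintype.card F : F)) = 0 := FiniteField.cast_card_eq_zero F
  rw [hF] at hcard
  push_cast at hcard
  have htwo : (2 : F) = 0 := pow_eq_zero_iff hn.ne' |>.mp hcard
  have key : b ^ 3 * (1 + b) ^ 5 = 0 := by
    linear_combination (h2 - h1) * ((a₁ * b + a₁ * b ^ 2 + b ^ 4) - (b + b ^ 2 + b ^ 3))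
      + (b ^ 2 * (1 + b) ^ 2) * h1
      + ((-1)*b^2 + b^2*a₁ + (-1)*b^2*a₁^2 + (-2)*b^3 + (2)*b^3*a₁ + (-2)*b^3*a₁^2
        + (-1)*b^4 + (2)*b^4*a₁ + (-1)*b^4*a₁^2 + (3)*b^5 + (4)*b^6 + (-1)*b^6*a₁
        + (3)*b^7) * htwo
  rcases mul_eq_zero.mp key with h | h
  · rw [pow_eq_zero_iff (by norm_num : (3:ℕ) ≠ 0) |>.mp h]; ring
  · rw [show (1 + b) = 0 from pow_eq_zero_iff (by norm_num : (5:ℕ) ≠ 0) |>.mp h]; ring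
end

section
/- Let q be even, a, b ∈ F_q^*, and E_1 = E_2 = 1 + a^2 + b^2 ≠ 0, F_3 = 1 + a^2 + b + a^2 b + b^2 + b^3, F_4 = a + a^2 + a^3 + a^4 + b + a^2 b + b^2 + a b^2 + b^3 + b^4. If there exists D_1 ∈ F_q with E_2^2 D_1^2 + E_1 E_2^2 D_1 + F_3^2 + E_1 E_2 F_3 + E_1^2 F_4 = 0, then Tr_{q/2}(F_4 / E_2^2) = 0; conversely, if Tr_{q/2}(F_4 / E_2^2) = 0, such D_1 exists. -/
/-- Artin–Schreier: in a finite field of characteristic 2, the equation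
`x ^ 2 + x = c` is solvable iff the absolute trace of `c` vanishes. -/
lemma artin_schreier_aux {F : Type*} [Field F] [Fintype F] [Algebra (ZMod 2) F]
    (n : ℕ) (hn : 0 < n) (hF : Fintype.card F = 2 ^ n) (c : F) :
    (∃ x : F, x ^ 2 + x = c) ↔ Algebra.trace (ZMod 2) F c = 0 := by
  haveI hchar : CharP F 2 := charP_of_injective_ringHom (algebraMap (ZMod 2) F).injective 2
  haveI : Module.Finite (ZMod 2) F := Module.Finite.of_finite
  haveI : Algebra.IsSeparable (ZMod 2) F := inferInstance
  have h2 : (2 : F) = 0 := by exact_mod_cast CharP.cast_eq_zero F 2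
  let e : F ≃ₐ[ZMod 2] F :=
    { frobeniusEquiv F 2 with
      commutes' := fun r => by
        show (algebraMap (ZMod 2) F r) ^ 2 = algebraMap (ZMod 2) F r
        rw [← map_pow]; congr 1; revert r; decide }
  have htr_sq : ∀ x : F, Algebra.trace (ZMod 2) F (x ^ 2) = Algebra.trace (ZMod 2) F x := by
    intro x
    have := Algebra.trace_eq_of_algEquiv e x
    simpa [e, frobeniusEquiv_def, frobenius_def] using this
  let φ : F →+ F := (frobenius F 2).toAddMonoidHom + AddMonoidHom.id F
  have hφ : ∀ x : F, φ x = x ^ 2 + x := fun x => rfl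
  let t : F →+ ZMod 2 := (Algebra.trace (ZMod 2) F).toAddMonoidHom
  have ht : ∀ x : F, t x = Algebra.trace (ZMod 2) F x := fun x => rfl
  -- kernel of φ is {0, 1}
  have hkerφ : (φ.ker : Set F) = {0, 1} := by
    ext x
    simp only [SetLike.mem_coe, AddMonoidHom.mem_ker, hφ, Set.mem_insert_iff,
      Set.mem_singleton_iff]
    constructor
    · intro h
      have hx : x * (x + 1) = 0 := by linear_combination h
      rcases mul_eq_zero.mp hx with h0 | h1
      · exact Or.inl h0
      · exact Or.inr (by linear_combination h1 - h2)
    · rintro (rfl | rfl)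
      · simp
      · linear_combination h2
  have hcard_kerφ : Nat.card φ.ker = 2 := by
    rw [← SetLike.coe_sort_coe, hkerφ, Nat.card_coe_set_eq,
      Set.ncard_pair (zero_ne_one (α := F))]
  -- trace is surjective
  have hts : Function.Surjective t := Algebra.trace_surjective (ZMod 2) F
  have hcardF : Nat.card F = 2 ^ n := by rw [Nat.card_eq_fintype_card, hF]
  -- card of range φ
  have h1 : Nat.card F = Nat.card (F ⧸ φ.ker) * 2 := by
    rw [AddSubgroup.card_eq_card_quotient_mul_card_addSubgroup φ.ker, hcard_kerφ]
  have hrange : Nat.card φ.range = Nat.card (F ⧸ φ.ker) :=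
    (Nat.card_congr (QuotientAddGroup.quotientKerEquivRange φ).toEquiv).symm
  -- card of ker t
  have h2' : Nat.card F = 2 * Nat.card t.ker := by
    have := AddSubgroup.card_eq_card_quotient_mul_card_addSubgroup t.ker
    rwa [Nat.card_congr (QuotientAddGroup.quotientKerEquivOfSurjective t hts).toEquiv,
      Nat.card_zmod] at this
  have hle : φ.range ≤ t.ker := by
    rintro y ⟨x, rfl⟩
    simp only [AddMonoidHom.mem_ker]
    show t (x ^ 2 + x) = 0
    rw [map_add, ht, ht, htr_sq, CharTwo.add_self_eq_zero]
  have heq : φ.range = t.ker := AddSubgroup.eq_of_le_of_card_ge hle (by omega)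
  constructor
  · rintro ⟨x, hx⟩
    have : c ∈ φ.range := ⟨x, hx⟩
    rw [heq] at this
    exact this
  · intro hc
    have : c ∈ t.ker := hc
    rw [← heq] at this
    exact this

/-- Completing the square for the quadratic in `D`. -/
lemma quad_equiv_aux {F : Type*} [Field F] (h2 : (2:F) = 0) (E F₃ F₄ : F) (hE : E ≠ 0) :
    (∃ D : F, E ^ 2 * D ^ 2 + E * E ^ 2 * D + F₃ ^ 2 + E * E * F₃ + E ^ 2 * F₄ = 0) ↔
      (∃ x : F, x ^ 2 + x = F₄ / E ^ 2) := by
  have hE2 : (E : F) ^ 2 ≠ 0 := pow_ne_zero 2 hE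
  constructor
  · rintro ⟨D, hD⟩
    refine ⟨(E * D + F₃) / E ^ 2, ?_⟩
    rw [eq_div_iff hE2]
    set x := (E * D + F₃) / E ^ 2 with hx
    have hxd : E ^ 2 * x = E * D + F₃ := by
      rw [hx]; field_simp
    apply mul_left_cancel₀ hE2
    linear_combination (E ^ 2 * x + E * D + F₃) * hxd + E ^ 2 * hxd - hD
      + (E * D * F₃ - E ^ 2 * F₄ + E ^ 2 * D ^ 2 + E ^ 2 * F₃ + E ^ 2 * F₄ + E ^ 3 * D
        + F₃ ^ 2) * h2
  · rintro ⟨x, hx⟩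
    rw [eq_div_iff hE2] at hx
    refine ⟨(E ^ 2 * x + F₃) / E, ?_⟩
    set D := (E ^ 2 * x + F₃) / E with hD
    have hxd : E * D = E ^ 2 * x + F₃ := by
      rw [hD]; field_simp
    linear_combination (E * D + E ^ 2 * x + F₃) * hxd + E ^ 2 * hxd + E ^ 2 * hx
      + (E ^ 2 * x * F₃ + F₃ ^ 2 + E ^ 2 * F₃ + E ^ 2 * F₄) * h2

/-- solvability of the quadratic for D₁ is equivalent to
Tr(F₄/E₂²) = 0. -/
theorem stmt_19 (n : ℕ) (hn : 0 < n) (F : Type*) [Field F] [Fintype F]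
    [Algebra (ZMod 2) F] (hF : Fintype.card F = 2 ^ n)
    (a b : F) (ha : a ≠ 0) (hb : b ≠ 0)
    (E₁ E₂ F₃ F₄ : F)
    (hE₁ : E₁ = 1 + a ^ 2 + b ^ 2) (hE₂ : E₂ = 1 + a ^ 2 + b ^ 2)
    (hE₂0 : E₂ ≠ 0)
    (hF₃ : F₃ = 1 + a ^ 2 + b + a ^ 2 * b + b ^ 2 + b ^ 3)
    (hF₄ : F₄ = a + a ^ 2 + a ^ 3 + a ^ 4 + b + a ^ 2 * b + b ^ 2 + a * b ^ 2
        + b ^ 3 + b ^ 4) :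
    (∃ D₁ : F, E₂ ^ 2 * D₁ ^ 2 + E₁ * E₂ ^ 2 * D₁ + F₃ ^ 2 + E₁ * E₂ * F₃
        + E₁ ^ 2 * F₄ = 0) ↔
      Algebra.trace (ZMod 2) F (F₄ / E₂ ^ 2) = 0 := by
  haveI hchar : CharP F 2 := charP_of_injective_ringHom (algebraMap (ZMod 2) F).injective 2
  have h2 : (2 : F) = 0 := by exact_mod_cast CharP.cast_eq_zero F 2
  have hEE : E₁ = E₂ := hE₁.trans hE₂.symm
  rw [hEE]
  rw [quad_equiv_aux h2 E₂ F₃ F₄ hE₂0]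
  exact artin_schreier_aux n hn hF (F₄ / E₂ ^ 2)
end
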